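/- arXiv:1504.03557 — 2 statements merged into one kernel-verified Lean document; each statement's English description precedes it below -/
import Mathlib

section
/- Let w_α(x) := A_α x1^{α1} x2^{α2} (1-x1-x2)^{α3} with A_α := Γ(|α|+3)/(Γ(α1+1)Γ(α2+1)Γ(α3+1)) and |α| := α1+α2+α3, where each αi > -1. Then for h, l ∈ Θ_m (with h3 := m-h1-h2, l3 := m-l1-l2), the weighted inner product ⟨B^m_h, B^m_l⟩_α := ∫_T w_α(x) B^m_h(x) B^m_l(x) dx equals C(m,h) C(m,l) (α1+1)_{h1+l1} (α2+1)_{h2+l2} (α3+1)_{h3+l3} / (|α|+3)_{2m}, where (a)_j denotes the shifted factorial (Pochhammer symbol) and C(m,k) the trinomial coefficient. -/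
/-!
The product of two Bernstein polynomials is `C(m,h) C(m,l)` times the single monomial
`x₁^(h₁+l₁) x₂^(h₂+l₂) (1-x₁-x₂)^(h₃+l₃)`, so everything reduces to the Dirichlet integral
`∫_T x₁^p x₂^q (1-x₁-x₂)^r = Γ(p+1) Γ(q+1) Γ(r+1) / Γ(p+q+r+3)`. That integral is computed by
pulling it back to the open unit square along `(u, v) ↦ (u, (1-u) v)`: the Jacobian `1-u` makes the
integrand split into two Beta integrals. Finally `Γ(a+n) = (a)ₙ Γ(a)` turns the Gamma quotients
into Pochhammer symbols.
-/

open Finset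

/-- Trinomial coefficient N!/(k1! k2! (N-k1-k2)!) as a real number. -/
noncomputable def trinom (N : ℕ) (k : ℕ × ℕ) : ℝ :=
  (N.factorial : ℝ) /
    ((k.1.factorial : ℝ) * (k.2.factorial : ℝ) * ((N - k.1 - k.2).factorial : ℝ))

/-- Bivariate Bernstein polynomial of degree n. -/
noncomputable def bern (n : ℕ) (k : ℕ × ℕ) (x : ℝ × ℝ) : ℝ :=
  trinom n k * x.1 ^ k.1 * x.2 ^ k.2 * (1 - x.1 - x.2) ^ (n - k.1 - k.2)

/-- The index set Θ_n = {k ∈ ℕ² : k1 + k2 ≤ n}. -/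
def Theta (n : ℕ) : Finset (ℕ × ℕ) :=
  (Finset.range (n + 1) ×ˢ Finset.range (n + 1)).filter (fun k => k.1 + k.2 ≤ n)


open MeasureTheory Real

/-- The standard triangle T ⊂ ℝ². -/
def stdTriangle : Set (ℝ × ℝ) :=
  {x : ℝ × ℝ | 0 ≤ x.1 ∧ 0 ≤ x.2 ∧ x.1 + x.2 ≤ 1}

/-- Shifted factorial (Pochhammer symbol) (a)_j. -/
noncomputable def poch (a : ℝ) (j : ℕ) : ℝ := (ascPochhammer ℝ j).eval a

/-- Normalizing constant A_α. -/
noncomputable def Aconst (α₁ α₂ α₃ : ℝ) : ℝ :=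
  Real.Gamma (α₁ + α₂ + α₃ + 3) /
    (Real.Gamma (α₁ + 1) * Real.Gamma (α₂ + 1) * Real.Gamma (α₃ + 1))

/-- The Jacobi-type weight w_α on the triangle. -/
noncomputable def walpha (α₁ α₂ α₃ : ℝ) (x : ℝ × ℝ) : ℝ :=
  Aconst α₁ α₂ α₃ * x.1 ^ α₁ * x.2 ^ α₂ * (1 - x.1 - x.2) ^ α₃


lemma integral_Ioo_rpow_mul_one_sub_rpow {a b : ℝ} (ha : -1 < a) (hb : -1 < b) :
    ∫ x in Set.Ioo (0 : ℝ) 1, x ^ a * (1 - x) ^ b =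
      Gamma (a + 1) * Gamma (b + 1) / Gamma (a + b + 2) := by
  have key := Complex.Gamma_mul_Gamma_eq_betaIntegral (s := ((a + 1 : ℝ) : ℂ))
    (t := ((b + 1 : ℝ) : ℂ)) (by simp; linarith) (by simp; linarith)
  have hbeta : Complex.betaIntegral ((a + 1 : ℝ) : ℂ) ((b + 1 : ℝ) : ℂ) =
      ((∫ x in (0 : ℝ)..1, x ^ a * (1 - x) ^ b : ℝ) : ℂ) := by
    rw [Complex.betaIntegral, ← intervalIntegral.integral_ofReal]
    refine intervalIntegral.integral_congr fun x hx => ?_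
    rw [Set.uIcc_of_le zero_le_one] at hx
    push_cast
    rw [Complex.ofReal_cpow hx.1, Complex.ofReal_cpow (sub_nonneg.2 hx.2)]
    norm_num
  rw [hbeta,
    show ((a + 1 : ℝ) : ℂ) + ((b + 1 : ℝ) : ℂ) = ((a + b + 2 : ℝ) : ℂ) by push_cast; ring,
    Complex.Gamma_ofReal, Complex.Gamma_ofReal, Complex.Gamma_ofReal] at key
  have key' : Gamma (a + 1) * Gamma (b + 1) =
      Gamma (a + b + 2) * ∫ x in (0 : ℝ)..1, x ^ a * (1 - x) ^ b := by exact_mod_cast key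
  rw [intervalIntegral.integral_of_le zero_le_one, integral_Ioc_eq_integral_Ioo] at key'
  rw [key', mul_div_cancel_left₀ _ (Gamma_pos_of_pos (by linarith)).ne']

def openTriangle : Set (ℝ × ℝ) := {x : ℝ × ℝ | 0 < x.1 ∧ 0 < x.2 ∧ x.1 + x.2 < 1}

lemma ae_volume_snd_ne (g : ℝ → ℝ) (hg : Measurable g) :
    ∀ᵐ x : ℝ × ℝ, x.2 ≠ g x.1 := by
  rw [Measure.volume_eq_prod]
  refine (Measure.ae_prod_iff_ae_ae (measurableSet_eq_fun (by fun_prop) (by fun_prop)).compl).2 ?_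
  exact .of_forall fun x => Measure.ae_ne volume (g x)

lemma stdTriangle_ae_eq_openTriangle : stdTriangle =ᵐ[volume] openTriangle := by
  have hfst : ∀ᵐ x : ℝ × ℝ, x.1 ≠ 0 := by
    rw [Measure.volume_eq_prod]
    exact Measure.quasiMeasurePreserving_fst.ae (p := (· ≠ 0)) (Measure.ae_ne volume 0)
  filter_upwards [hfst, ae_volume_snd_ne (fun _ => 0) measurable_const,
    ae_volume_snd_ne (1 - ·) (by fun_prop)] with x h1 h2 h3
  change (_ ∧ _ ∧ _) = (_ ∧ _ ∧ _)
  grind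

def squareToTriangle (z : ℝ × ℝ) : ℝ × ℝ := (z.1, (1 - z.1) * z.2)

lemma hasFDerivAt_squareToTriangle (z : ℝ × ℝ) :
    HasFDerivAt squareToTriangle
      (LinearMap.toContinuousLinearMap (Matrix.toLin (Module.Basis.finTwoProd ℝ)
        (Module.Basis.finTwoProd ℝ) !![1, 0; -z.2, 1 - z.1])) z := by
  rw [Matrix.toLin_finTwoProd_toContinuousLinearMap]
  refine (hasFDerivAt_fst.prodMk
    (((hasFDerivAt_const (1 : ℝ) z).sub hasFDerivAt_fst).mul hasFDerivAt_snd)).congr_fderiv ?_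
  ext <;> simp

lemma injOn_squareToTriangle :
    Set.InjOn squareToTriangle (Set.Ioo (0 : ℝ) 1 ×ˢ Set.Ioo (0 : ℝ) 1) := by
  rintro ⟨u, v⟩ ⟨⟨_, hu⟩, _⟩ ⟨u', v'⟩ _ heq
  simp only [squareToTriangle, Prod.mk.injEq] at heq
  obtain ⟨rfl, h⟩ := heq
  rw [mul_left_cancel₀ (sub_ne_zero.2 hu.ne') h]

lemma image_squareToTriangle :
    squareToTriangle '' (Set.Ioo (0 : ℝ) 1 ×ˢ Set.Ioo (0 : ℝ) 1) = openTriangle := by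
  ext ⟨x, y⟩
  constructor
  · rintro ⟨⟨u, v⟩, ⟨⟨hu0, hu1⟩, hv0, hv1⟩, heq⟩
    simp only [squareToTriangle, Prod.mk.injEq] at heq
    obtain ⟨rfl, rfl⟩ := heq
    exact ⟨hu0, mul_pos (by linarith) hv0, by nlinarith⟩
  · rintro ⟨hx, hy, hxy⟩
    have h1x : (0 : ℝ) < 1 - x := by linarith
    refine ⟨(x, y / (1 - x)),
      ⟨⟨hx, by linarith⟩, div_pos hy h1x, (div_lt_one h1x).2 (by linarith)⟩, ?_⟩
    simp [squareToTriangle, mul_div_cancel₀ y h1x.ne']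

lemma setIntegral_stdTriangle_dirichlet {p q r : ℝ} (hp : -1 < p) (hq : -1 < q) (hr : -1 < r) :
    ∫ x in stdTriangle, x.1 ^ p * x.2 ^ q * (1 - x.1 - x.2) ^ r =
      Gamma (p + 1) * Gamma (q + 1) * Gamma (r + 1) / Gamma (p + q + r + 3) := by
  have hsquare : MeasurableSet (Set.Ioo (0 : ℝ) 1 ×ˢ Set.Ioo (0 : ℝ) 1) :=
    measurableSet_Ioo.prod measurableSet_Ioo
  have hjac (u v : ℝ) : (LinearMap.toContinuousLinearMap (Matrix.toLin
      (Module.Basis.finTwoProd ℝ) (Module.Basis.finTwoProd ℝ) !![1, 0; -v, 1 - u])).det =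
      1 - u := by
    simp [LinearMap.det_toContinuousLinearMap, LinearMap.det_toLin, Matrix.det_fin_two_of]
  calc ∫ x in stdTriangle, x.1 ^ p * x.2 ^ q * (1 - x.1 - x.2) ^ r
      = ∫ x in squareToTriangle '' (Set.Ioo 0 1 ×ˢ Set.Ioo 0 1),
          x.1 ^ p * x.2 ^ q * (1 - x.1 - x.2) ^ r := by
        rw [image_squareToTriangle, setIntegral_congr_set stdTriangle_ae_eq_openTriangle]
    _ = ∫ z in Set.Ioo 0 1 ×ˢ Set.Ioo 0 1,
          (z.1 ^ p * (1 - z.1) ^ (q + r + 1)) * (z.2 ^ q * (1 - z.2) ^ r) := by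
        rw [integral_image_eq_integral_abs_det_fderiv_smul volume hsquare
          (fun z _ => (hasFDerivAt_squareToTriangle z).hasFDerivWithinAt) injOn_squareToTriangle]
        refine setIntegral_congr_fun hsquare ?_
        rintro ⟨u, v⟩ ⟨⟨-, hu1⟩, hv0, hv1⟩
        have h1u : 0 < 1 - u := by linarith [hu1]
        have h1v : 0 < 1 - v := by linarith [hv1]
        simp only [hjac, squareToTriangle, smul_eq_mul, abs_of_pos h1u]
        rw [show 1 - u - (1 - u) * v = (1 - u) * (1 - v) by ring,
          mul_rpow h1u.le hv0.le, mul_rpow h1u.le h1v.le,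
          rpow_add h1u, rpow_add h1u, rpow_one]
        ring
    _ = (∫ u in Set.Ioo (0 : ℝ) 1, u ^ p * (1 - u) ^ (q + r + 1)) *
          ∫ v in Set.Ioo (0 : ℝ) 1, v ^ q * (1 - v) ^ r := by
        rw [Measure.volume_eq_prod]
        exact setIntegral_prod_mul (fun u => u ^ p * (1 - u) ^ (q + r + 1))
          (fun v => v ^ q * (1 - v) ^ r) _ _
    _ = Gamma (p + 1) * Gamma (q + 1) * Gamma (r + 1) / Gamma (p + q + r + 3) := by
        rw [integral_Ioo_rpow_mul_one_sub_rpow hp (by linarith),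
          integral_Ioo_rpow_mul_one_sub_rpow hq hr,
          show p + (q + r + 1) + 2 = p + q + r + 3 by ring,
          show q + r + 1 + 1 = q + r + 2 by ring]
        have : Gamma (q + r + 2) ≠ 0 := (Gamma_pos_of_pos (by linarith)).ne'
        field_simp

lemma Gamma_add_natCast_eq_poch_mul {a : ℝ} (ha : 0 < a) (n : ℕ) :
    Gamma (a + n) = poch a n * Gamma a := by
  induction n with
  | zero => simp [poch]
  | succ n ih =>
    rw [Nat.cast_succ, ← add_assoc, Gamma_add_one (by positivity), ih]
    simp only [poch, ascPochhammer_succ_right, Polynomial.eval_mul, Polynomial.eval_add,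
      Polynomial.eval_X, Polynomial.eval_natCast]
    ring

lemma rpow_add_natCast_of_neg_one_lt {x a : ℝ} (hx : 0 ≤ x) (ha : -1 < a) (n : ℕ) :
    x ^ (a + n) = x ^ a * x ^ n := by
  rcases n.eq_zero_or_pos with rfl | hn
  · simp
  · have : (1 : ℝ) ≤ n := Nat.one_le_cast.2 hn
    exact rpow_add_natCast' hx (by linarith)

lemma measurableSet_stdTriangle : MeasurableSet stdTriangle :=
  (measurableSet_le measurable_const measurable_fst).inter
    ((measurableSet_le measurable_const measurable_snd).inter
      (measurableSet_le (measurable_fst.add measurable_snd) measurable_const))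

lemma setIntegral_stdTriangle_walpha_mul_monomial {α₁ α₂ α₃ : ℝ}
    (h₁ : -1 < α₁) (h₂ : -1 < α₂) (h₃ : -1 < α₃) (k₁ k₂ k₃ : ℕ) :
    ∫ x in stdTriangle, walpha α₁ α₂ α₃ x * (x.1 ^ k₁ * x.2 ^ k₂ * (1 - x.1 - x.2) ^ k₃) =
      poch (α₁ + 1) k₁ * poch (α₂ + 1) k₂ * poch (α₃ + 1) k₃ /
        poch (α₁ + α₂ + α₃ + 3) (k₁ + k₂ + k₃) := by
  have hk₁ : (0 : ℝ) ≤ k₁ := k₁.cast_nonneg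
  have hk₂ : (0 : ℝ) ≤ k₂ := k₂.cast_nonneg
  have hk₃ : (0 : ℝ) ≤ k₃ := k₃.cast_nonneg
  calc ∫ x in stdTriangle, walpha α₁ α₂ α₃ x * (x.1 ^ k₁ * x.2 ^ k₂ * (1 - x.1 - x.2) ^ k₃)
      = ∫ x in stdTriangle, Aconst α₁ α₂ α₃ *
          (x.1 ^ (α₁ + k₁) * x.2 ^ (α₂ + k₂) * (1 - x.1 - x.2) ^ (α₃ + k₃)) := by
        refine setIntegral_congr_fun measurableSet_stdTriangle fun x ⟨hx₁, hx₂, hx₁₂⟩ => ?_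
        rw [rpow_add_natCast_of_neg_one_lt hx₁ h₁, rpow_add_natCast_of_neg_one_lt hx₂ h₂,
          rpow_add_natCast_of_neg_one_lt (by linarith) h₃, walpha]
        ring
    _ = Aconst α₁ α₂ α₃ * (Gamma (α₁ + 1 + k₁) * Gamma (α₂ + 1 + k₂) * Gamma (α₃ + 1 + k₃) /
          Gamma (α₁ + α₂ + α₃ + 3 + (k₁ + k₂ + k₃ : ℕ))) := by
        rw [integral_const_mul, setIntegral_stdTriangle_dirichlet (by linarith) (by linarith)
          (by linarith)]
        push_cast
        ring_nf
    _ = _ := by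
        have hG (a : ℝ) (ha : 0 < a) : Gamma a ≠ 0 := (Gamma_pos_of_pos ha).ne'
        rw [Gamma_add_natCast_eq_poch_mul (by linarith), Gamma_add_natCast_eq_poch_mul (by linarith),
          Gamma_add_natCast_eq_poch_mul (by linarith), Gamma_add_natCast_eq_poch_mul (by linarith),
          Aconst]
        field_simp [hG (α₁ + 1) (by linarith), hG (α₂ + 1) (by linarith),
          hG (α₃ + 1) (by linarith), hG (α₁ + α₂ + α₃ + 3) (by linarith)]

lemma bern_mul_bern (m : ℕ) (h l : ℕ × ℕ) (x : ℝ × ℝ) :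
    bern m h x * bern m l x = trinom m h * trinom m l *
      (x.1 ^ (h.1 + l.1) * x.2 ^ (h.2 + l.2) *
        (1 - x.1 - x.2) ^ ((m - h.1 - h.2) + (m - l.1 - l.2))) := by
  simp only [bern, pow_add]
  ring

/-- The inner product ⟨B^m_h, B^m_l⟩_α of two Bernstein polynomials equals
    C(m,h) C(m,l) (α1+1)_{h1+l1} (α2+1)_{h2+l2} (α3+1)_{h3+l3} / (|α|+3)_{2m}. -/
theorem bernstein_inner_product (α₁ α₂ α₃ : ℝ)
    (h₁ : -1 < α₁) (h₂ : -1 < α₂) (h₃ : -1 < α₃)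
    (m : ℕ) (h l : ℕ × ℕ) (hh : h ∈ Theta m) (hl : l ∈ Theta m) :
    ∫ x in stdTriangle, walpha α₁ α₂ α₃ x * bern m h x * bern m l x =
      trinom m h * trinom m l *
        (poch (α₁ + 1) (h.1 + l.1) * poch (α₂ + 1) (h.2 + l.2) *
          poch (α₃ + 1) ((m - h.1 - h.2) + (m - l.1 - l.2))) /
        poch (α₁ + α₂ + α₃ + 3) (2 * m) := by
  have hdeg : h.1 + l.1 + (h.2 + l.2) + ((m - h.1 - h.2) + (m - l.1 - l.2)) = 2 * m := by
    have := (mem_filter.1 hh).2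
    have := (mem_filter.1 hl).2
    omega
  simp_rw [mul_assoc (walpha α₁ α₂ α₃ _), bern_mul_bern,
    mul_left_comm (walpha α₁ α₂ α₃ _) (trinom m h * trinom m l)]
  rw [integral_const_mul, setIntegral_stdTriangle_walpha_mul_monomial h₁ h₂ h₃, hdeg]
  ring
end

section
/- Recurrence-based evaluation of weighted integrals of Chebyshev expansions: let α, β > -1, r := β - α, u := α + β + 1, and let S(x) = (1/2)γ_0 + ∑_{i=1}^{M} γ_i T_i(2x-1) be a polynomial expressed in shifted Chebyshev polynomials of the first kind. Define d_{M+1} = d_M := 0 and d_{i-1} := (2r d_i + (i-u) d_{i+1} - γ_i)/(i+u) for i = M, M-1, ..., 1. Then ∫_0^1 (1-x)^α x^β S(x) dx = B(α+1, β+1) · ((1/2)γ_0 - r d_0 + u d_1), where B denotes the Beta function Γ(α+1)Γ(β+1)/Γ(α+β+2). -/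
/-! Integration by parts against the weight `(1 - x) ^ α * x ^ β` shows that the moments
`I n = ∫ (1 - x) ^ α * x ^ β * T n (2 x - 1)` satisfy the three-term recurrence
`(n + u + 1) I (n + 1) = 2 r I n + (n - u - 1) I (n - 1)`, with `I 0 = B(α + 1, β + 1)` and,
since `T (-1) = T 1`, `(u + 1) I 1 = r I 0`. The backward recurrence defining `d` is the adjoint
of this one, so `∑ γ i * I i` telescopes, as in Clenshaw's algorithm, to a boundary term in
`d 0, d 1, I 0, I 1`. -/

open Real Finset intervalIntegral

open Polynomial Polynomial.Chebyshev MeasureTheory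

theorem Finset.sum_Icc_one_eq_sub_of_eq_sub {G : Type*} [AddCommGroup G] (g H : ℕ → G) (M : ℕ)
    (h : ∀ k < M, g (k + 1) = H (k + 1) - H k) :
    ∑ i ∈ Icc 1 M, g i = H M - H 0 := by
  rw [← sum_range_sub, ← Ico_add_one_right_eq_Icc, sum_Ico_eq_sum_range, Nat.add_sub_cancel]
  exact sum_congr rfl fun k hk => by rw [add_comm, h k (mem_range.1 hk)]

theorem sum_mul_eq_of_three_term_recurrence {R : Type*} [CommRing R] (a b c I d γ : ℕ → R)
    (M : ℕ) (hI : ∀ n, a (n + 1) * I (n + 2) = b (n + 1) * I (n + 1) + c (n + 1) * I n)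
    (hd : ∀ k < M, a k * d k = b (k + 1) * d (k + 1) + c (k + 2) * d (k + 2) - γ (k + 1))
    (hdM : d M = 0) (hdM1 : d (M + 1) = 0) :
    ∑ i ∈ Icc 1 M, γ i * I i = -(a 0 * I 1 * d 0 + c 1 * I 0 * d 1) := by
  -- `γ (k + 1) * I (k + 1) = H (k + 1) - H k` combines the two recurrences at index `k + 1`
  set H : ℕ → R := fun k => a k * I (k + 1) * d k + c (k + 1) * I k * d (k + 1)
  have hHM : H M = 0 := by simp [H, hdM, hdM1]
  rw [Finset.sum_Icc_one_eq_sub_of_eq_sub _ H M fun k hk => ?_, hHM, zero_sub]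
  linear_combination I (k + 1) * hd k hk - d (k + 1) * hI k

theorem intervalIntegrable_one_sub_rpow_mul_rpow_mul {α β : ℝ} (hα : -1 < α) (hβ : -1 < β)
    {f : ℝ → ℝ} (hf : ContinuousOn f (Set.Icc 0 1)) :
    IntervalIntegrable (fun x => (1 - x) ^ α * x ^ β * f x) volume 0 1 := by
  refine IntervalIntegrable.trans (b := 1 / 2) ?_ ?_
  · rw [show (fun x : ℝ => (1 - x) ^ α * x ^ β * f x) = fun x => x ^ β * ((1 - x) ^ α * f x)
      from funext fun x => by ring]
    refine (intervalIntegrable_rpow' hβ).mul_continuousOn ?_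
    rw [Set.uIcc_of_le (by norm_num)]
    refine ((continuous_const.sub continuous_id).continuousOn.rpow_const fun x hx => ?_).mul
      (hf.mono (Set.Icc_subset_Icc_right (by norm_num)))
    exact Or.inl (by linarith [hx.2] : (0 : ℝ) < 1 - x).ne'
  · rw [show (fun x : ℝ => (1 - x) ^ α * x ^ β * f x) = fun x => (1 - x) ^ α * (x ^ β * f x)
      from funext fun x => by ring]
    have h : IntervalIntegrable (fun x : ℝ => (1 - x) ^ α) volume (1 / 2) 1 := by
      simpa [show (1 : ℝ) - 2⁻¹ = 2⁻¹ by norm_num] using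
        ((intervalIntegrable_rpow' hα (a := 0) (b := 1 / 2)).comp_sub_left 1).symm
    refine h.mul_continuousOn ?_
    rw [Set.uIcc_of_le (by norm_num)]
    refine (continuous_id.continuousOn.rpow_const fun x hx => ?_).mul
      (hf.mono (Set.Icc_subset_Icc_left (by norm_num)))
    exact Or.inl (by linarith [hx.1] : (0 : ℝ) < x).ne'

theorem integral_one_sub_rpow_mul_rpow {α β : ℝ} (hα : -1 < α) (hβ : -1 < β) :
    ∫ x in (0:ℝ)..1, (1 - x) ^ α * x ^ β =
      Gamma (α + 1) * Gamma (β + 1) / Gamma (α + β + 2) := by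
  have hbeta : Gamma (α + 1) * Gamma (β + 1) / Gamma (α + β + 2) =
      ProbabilityTheory.beta (β + 1) (α + 1) := by
    rw [ProbabilityTheory.beta, mul_comm]; ring_nf
  rw [hbeta, ProbabilityTheory.beta_eq_betaIntegralReal _ _ (by linarith) (by linarith),
    Complex.betaIntegral, ← Complex.ofReal_re (∫ x in (0:ℝ)..1, (1 - x) ^ α * x ^ β),
    ← intervalIntegral.integral_ofReal]
  congr 1
  refine integral_congr fun x hx => ?_
  rw [Set.uIcc_of_le zero_le_one] at hx
  push_cast
  rw [Complex.ofReal_cpow (by linarith [hx.2]), Complex.ofReal_cpow hx.1]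
  simp only [add_sub_cancel_right, Complex.ofReal_sub, Complex.ofReal_one]
  ring

theorem hasDerivAt_one_sub_rpow_mul_rpow_mul {α β x : ℝ} (hx : x ∈ Set.Ioo 0 1)
    {f : ℝ → ℝ} {f' : ℝ} (hf : HasDerivAt f f' x) :
    HasDerivAt (fun x => (1 - x) ^ (α + 1) * x ^ (β + 1) * f x)
      ((1 - x) ^ α * x ^ β *
        ((β + 1) * (1 - x) * f x - (α + 1) * x * f x + (1 - x) * x * f')) x := by
  obtain ⟨hx0, hx1⟩ := hx
  have hx1' : 0 < 1 - x := by linarith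
  have h1 : HasDerivAt (fun x => (1 - x) ^ (α + 1)) (-((α + 1) * (1 - x) ^ α)) x := by
    convert ((hasDerivAt_id' x).const_sub 1).rpow_const (p := α + 1) (Or.inl hx1'.ne') using 1
    rw [add_sub_cancel_right]
    ring
  have h2 : HasDerivAt (fun x => x ^ (β + 1)) ((β + 1) * x ^ β) x := by
    simpa using (hasDerivAt_id' x).rpow_const (p := β + 1) (Or.inl hx0.ne')
  refine ((h1.mul h2).mul hf).congr_deriv ?_
  simp only [Pi.mul_apply]
  rw [rpow_add hx1', rpow_add hx0, rpow_one, rpow_one]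
  ring

theorem integral_one_sub_rpow_mul_rpow_mul_eq_zero {α β : ℝ} (hα : -1 < α) (hβ : -1 < β)
    {f f' : ℝ → ℝ} (hf : ∀ x, HasDerivAt f (f' x) x) (hf' : Continuous f') :
    ∫ x in (0:ℝ)..1, (1 - x) ^ α * x ^ β *
      ((β + 1) * (1 - x) * f x - (α + 1) * x * f x + (1 - x) * x * f' x) = 0 := by
  have hfc : Continuous f := continuous_iff_continuousAt.2 fun x => (hf x).continuousAt
  have hcont : ContinuousOn (fun x => (1 - x) ^ (α + 1) * x ^ (β + 1) * f x) (Set.Icc 0 1) := by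
    refine ContinuousOn.mul (ContinuousOn.mul ?_ ?_) hfc.continuousOn <;>
      exact ContinuousOn.rpow_const (by fun_prop) fun x _ => Or.inr (by linarith)
  rw [integral_eq_sub_of_hasDerivAt_of_le zero_le_one hcont
    (fun x hx => hasDerivAt_one_sub_rpow_mul_rpow_mul hx (hf x))
    (intervalIntegrable_one_sub_rpow_mul_rpow_mul hα hβ (by fun_prop))]
  simp [zero_rpow (by linarith : α + 1 ≠ 0), zero_rpow (by linarith : β + 1 ≠ 0)]

/-- Four times the integrand of `integral_one_sub_rpow_mul_rpow_mul_eq_zero` for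
`f x = T n (2 x - 1)`, written in the variable `y = 2 x - 1`. -/
theorem Polynomial.Chebyshev.eval_jacobiOperator_T {R : Type*} [CommRing R] (a b y : R) (n : ℤ) :
    2 * ((b + 1) * (1 - y) - (a + 1) * (1 + y)) * (T R n).eval y
        + 2 * (1 - y ^ 2) * (derivative (T R n)).eval y =
      2 * (b - a) * (T R n).eval y - (n + (a + b + 1) + 1) * (T R (n + 1)).eval y
        + (n - (a + b + 1) - 1) * (T R (n - 1)).eval y := by
  have hderiv := congrArg (eval y) (one_sub_X_sq_mul_derivative_T_eq_poly_in_T (R := R) (n - 1))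
  have hrec := congrArg (eval y) (T_add_two R (n - 1))
  simp only [sub_add_cancel, show n - 1 + 2 = n + 1 by ring, eval_mul, eval_sub, eval_pow,
    eval_X, eval_one, eval_intCast, eval_ofNat, Int.cast_sub, Int.cast_one] at hderiv hrec
  linear_combination 2 * hderiv + (n + (a + b + 1) + 1) * hrec

noncomputable def chebyshevJacobiMoment (α β : ℝ) (n : ℤ) : ℝ :=
  ∫ x in (0:ℝ)..1, (1 - x) ^ α * x ^ β * (T ℝ n).eval (2 * x - 1)

theorem intervalIntegrable_chebyshevJacobiMoment {α β : ℝ} (hα : -1 < α) (hβ : -1 < β)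
    (n : ℤ) :
    IntervalIntegrable (fun x => (1 - x) ^ α * x ^ β * (T ℝ n).eval (2 * x - 1)) volume 0 1 :=
  intervalIntegrable_one_sub_rpow_mul_rpow_mul hα hβ (by fun_prop)

theorem chebyshevJacobiMoment_succ {α β : ℝ} (hα : -1 < α) (hβ : -1 < β) (n : ℤ) :
    (n + (α + β + 1) + 1) * chebyshevJacobiMoment α β (n + 1) =
      2 * (β - α) * chebyshevJacobiMoment α β n
        + (n - (α + β + 1) - 1) * chebyshevJacobiMoment α β (n - 1) := by
  have hT (x : ℝ) : HasDerivAt (fun x => (T ℝ n).eval (2 * x - 1))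
      (2 * (derivative (T ℝ n)).eval (2 * x - 1)) x := by
    have h := ((T ℝ n).hasDerivAt (2 * x - 1)).comp x
      (((hasDerivAt_id' x).const_mul 2).sub_const 1)
    exact h.congr_deriv (by ring)
  have hibp := integral_one_sub_rpow_mul_rpow_mul_eq_zero hα hβ hT (by fun_prop)
  set w : ℤ → ℝ → ℝ := fun m x => (1 - x) ^ α * x ^ β * (T ℝ m).eval (2 * x - 1)
  have hw (m : ℤ) := intervalIntegrable_chebyshevJacobiMoment hα hβ m
  rw [integral_congr (g := fun x => (2 * (β - α) / 4) * w n x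
      - ((n + (α + β + 1) + 1) / 4) * w (n + 1) x + ((n - (α + β + 1) - 1) / 4) * w (n - 1) x)
      fun x _ => by linear_combination (1 - x) ^ α * x ^ β / 4 *
        eval_jacobiOperator_T α β (2 * x - 1) n,
    integral_add (((hw n).const_mul _).sub ((hw (n + 1)).const_mul _)) ((hw (n - 1)).const_mul _),
    integral_sub ((hw n).const_mul _) ((hw (n + 1)).const_mul _),
    intervalIntegral.integral_const_mul, intervalIntegral.integral_const_mul,
    intervalIntegral.integral_const_mul] at hibp
  unfold chebyshevJacobiMoment
  linear_combination -4 * hibp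

theorem chebyshevJacobiMoment_zero {α β : ℝ} (hα : -1 < α) (hβ : -1 < β) :
    chebyshevJacobiMoment α β 0 = Gamma (α + 1) * Gamma (β + 1) / Gamma (α + β + 2) := by
  simp [chebyshevJacobiMoment, integral_one_sub_rpow_mul_rpow hα hβ]

theorem chebyshevJacobiMoment_one {α β : ℝ} (hα : -1 < α) (hβ : -1 < β) :
    (α + β + 2) * chebyshevJacobiMoment α β 1 = (β - α) * chebyshevJacobiMoment α β 0 := by
  have hneg : chebyshevJacobiMoment α β (-1) = chebyshevJacobiMoment α β 1 := by
    rw [chebyshevJacobiMoment, chebyshevJacobiMoment, T_neg]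
  have h := chebyshevJacobiMoment_succ hα hβ 0
  rw [zero_sub, zero_add, hneg] at h
  push_cast at h
  linear_combination h / 2

theorem integral_mul_chebyshev_series {α β : ℝ} (hα : -1 < α) (hβ : -1 < β) (c : ℝ)
    (γ : ℕ → ℝ) (s : Finset ℕ) :
    ∫ x in (0:ℝ)..1,
        (1 - x) ^ α * x ^ β * (c + ∑ i ∈ s, γ i * (T ℝ i).eval (2 * x - 1)) =
      c * chebyshevJacobiMoment α β 0 + ∑ i ∈ s, γ i * chebyshevJacobiMoment α β i := by
  have hint (n : ℤ) := intervalIntegrable_chebyshevJacobiMoment hα hβ n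
  have hsum : IntervalIntegrable (fun x => ∑ i ∈ s, γ i *
      ((1 - x) ^ α * x ^ β * (T ℝ i).eval (2 * x - 1))) volume 0 1 := by
    simpa only [Finset.sum_fn] using IntervalIntegrable.sum s fun i _ => (hint i).const_mul (γ i)
  rw [integral_congr (g := fun x => c * ((1 - x) ^ α * x ^ β * (T ℝ 0).eval (2 * x - 1)) +
      ∑ i ∈ s, γ i * ((1 - x) ^ α * x ^ β * (T ℝ i).eval (2 * x - 1))) fun x _ => by
      simp only [T_zero, eval_one, mul_add, Finset.mul_sum]; ring_nf,
    integral_add ((hint 0).const_mul c) hsum,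
    integral_finsetSum fun (i : ℕ) _ => (hint i).const_mul (γ i)]
  simp only [intervalIntegral.integral_const_mul, chebyshevJacobiMoment]

/-- Evaluation of the integral ∫₀¹ (1-x)^α x^β S(x) dx of a polynomial S given
    by its shifted Chebyshev expansion, via a backward recurrence. -/
theorem chebyshev_jacobi_integral (α β : ℝ) (hα : -1 < α) (hβ : -1 < β)
    (M : ℕ) (γ : ℕ → ℝ) (d : ℕ → ℝ)
    (hdM : d M = 0) (hdM1 : d (M + 1) = 0)
    (hd : ∀ i : ℕ, 1 ≤ i → i ≤ M →
      d (i - 1) = (2 * (β - α) * d i + ((i : ℝ) - (α + β + 1)) * d (i + 1) - γ i) /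
        ((i : ℝ) + (α + β + 1))) :
    ∫ x in (0:ℝ)..1, (1 - x) ^ α * x ^ β *
        (γ 0 / 2 + ∑ i ∈ Finset.Icc 1 M,
          γ i * (Polynomial.Chebyshev.T ℝ (i : ℤ)).eval (2 * x - 1)) =
      (Real.Gamma (α + 1) * Real.Gamma (β + 1) / Real.Gamma (α + β + 2)) *
        (γ 0 / 2 - (β - α) * d 0 + (α + β + 1) * d 1) := by
  have hmoments (n : ℕ) := chebyshevJacobiMoment_succ hα hβ (n + 1)
  simp only [add_sub_cancel_right, Int.cast_add, Int.cast_natCast, Int.cast_one,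
    add_assoc _ (1 : ℤ) 1, Int.reduceAdd] at hmoments
  have hd' (k : ℕ) (hk : k < M) :
      (k + (α + β + 1) + 1) * d k =
        2 * (β - α) * d (k + 1) + ((k + 2 : ℕ) - (α + β + 1) - 1) * d (k + 2)
          - γ (k + 1) := by
    have hpos : (0 : ℝ) < k + 1 + (α + β + 1) := by linarith [(k.cast_nonneg : (0 : ℝ) ≤ k)]
    have h := hd (k + 1) (by omega) hk
    push_cast [Nat.add_sub_cancel] at h ⊢
    rw [eq_div_iff hpos.ne'] at h
    linear_combination h
  have hsum := sum_mul_eq_of_three_term_recurrence (fun k => k + (α + β + 1) + 1)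
    (fun _ => 2 * (β - α)) (fun k => k - (α + β + 1) - 1)
    (fun k => chebyshevJacobiMoment α β k) d γ M (fun n => by push_cast; exact hmoments n)
    hd' hdM hdM1
  rw [integral_mul_chebyshev_series hα hβ, hsum, ← chebyshevJacobiMoment_zero hα hβ]
  push_cast
  linear_combination (-d 0) * chebyshevJacobiMoment_one hα hβ
end
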